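/- arXiv:1602.05926 — 3 statements merged into one kernel-verified Lean document; each statement's English description precedes it below -/
import Mathlib

section
/- For every graph G with n vertices, col_n(G) = tw(G) + 1, where tw(G) is the treewidth of G. -/
open SimpleGraph

variable {V : Type*}

/-- Weakly r-reachable vertices from `v` w.r.t. order `L`. -/
def WReach (G : SimpleGraph V) (L : V ↪ ℕ) (r : ℕ) (v : V) : Set V :=
  {u | ∃ p : G.Walk v u, p.IsPath ∧ p.length ≤ r ∧ ∀ w ∈ p.support, L u ≤ L w}

/-- Strongly r-reachable vertices from `v` w.r.t. order `L`. -/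
def SReach (G : SimpleGraph V) (L : V ↪ ℕ) (r : ℕ) (v : V) : Set V :=
  {u | ∃ p : G.Walk v u, p.IsPath ∧ p.length ≤ r ∧ L u ≤ L v ∧
    ∀ w ∈ p.support, w ≠ v → w ≠ u → L v < L w}

/-- r-admissibility of a vertex `v` w.r.t. order `L`. -/
noncomputable def admAt (G : SimpleGraph V) (L : V ↪ ℕ) (r : ℕ) (v : V) : ℕ :=
  sSup {k | ∃ (e : Fin k → V) (p : ∀ i, G.Walk v (e i)),
    ∀ i, (p i).IsPath ∧ (p i).length ≤ r ∧ L (e i) ≤ L v ∧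
      ∀ j, i ≠ j → {w | w ∈ (p i).support} ∩ {w | w ∈ (p j).support} = {v}}

/-- Weak r-colouring number. -/
noncomputable def wcol (G : SimpleGraph V) (r : ℕ) : ℕ :=
  sInf {k | ∃ L : V ↪ ℕ, ∀ v, (WReach G L r v).ncard ≤ k}

/-- r-colouring number. -/
noncomputable def gcol (G : SimpleGraph V) (r : ℕ) : ℕ :=
  sInf {k | ∃ L : V ↪ ℕ, ∀ v, (SReach G L r v).ncard ≤ k}

/-- r-admissibility number. -/
noncomputable def adm (G : SimpleGraph V) (r : ℕ) : ℕ :=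
  sInf {k | ∃ L : V ↪ ℕ, ∀ v, admAt G L r v ≤ k}
/-- `(T, bag)` is a tree decomposition of `G`. -/
def IsTreeDecomp (G : SimpleGraph V) {β : Type} (T : SimpleGraph β) (bag : β → Set V) : Prop :=
  T.IsTree ∧ (∀ v : V, ∃ t, v ∈ bag t) ∧
  (∀ ⦃u v⦄, G.Adj u v → ∃ t, u ∈ bag t ∧ v ∈ bag t) ∧
  (∀ (v : V) (t₁ t₂ : β), v ∈ bag t₁ → v ∈ bag t₂ →
    ∀ (p : T.Walk t₁ t₂), p.IsPath → ∀ t ∈ p.support, v ∈ bag t)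

/-- `G` has treewidth at most `k`. -/
def HasTreewidthLE (G : SimpleGraph V) (k : ℕ) : Prop :=
  ∃ (β : Type) (T : SimpleGraph β) (bag : β → Set V),
    IsTreeDecomp G T bag ∧ ∀ t, (bag t).ncard ≤ k + 1

/-- The treewidth of `G`. -/
noncomputable def treewidth (G : SimpleGraph V) : ℕ := sInf {k | HasTreewidthLE G k}

/-!
Given an order `L`, join every vertex `v` to the latest vertex of `SReach_n(v) \ {v}` (or to the
first vertex of `L` if there is none). Since the radius `n` bounds no path, strong reachability
passes from `v` to this parent, so the sets `SReach_n(v)` are the bags of a tree decomposition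
along the resulting tree, and `tw(G) ≤ col_n(G) - 1`.

Conversely, root a tree decomposition and order the vertices by the depth of the highest bag
containing them. A path leaving `v` through later vertices never climbs above the top bag `t` of
`v`, and its last edge then forces its endpoint into `t`; so `SReach_n(v) ⊆ t` and
`col_n(G) ≤ tw(G) + 1`.
-/

open Walk

namespace SimpleGraph

section Tree

variable {β : Type*} {T : SimpleGraph β}

lemma IsAcyclic.eq_of_isPath (hT : T.IsAcyclic) {a b : β} {p q : T.Walk a b} (hp : p.IsPath)
    (hq : q.IsPath) : p = q :=
  Subtype.mk.inj <| hT.subsingleton_path a b |>.elim ⟨p, hp⟩ ⟨q, hq⟩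

lemma IsAcyclic.support_subset_of_isPath (hT : T.IsAcyclic) {a b : β} {p : T.Walk a b}
    (hp : p.IsPath) (q : T.Walk a b) : p.support ⊆ q.support := by
  classical
  rw [hT.eq_of_isPath hp q.bypass_isPath]
  exact q.support_bypass_subset_support

lemma IsTree.length_eq_dist (hT : T.IsTree) {s t : β} {p : T.Walk s t} (hp : p.IsPath) :
    p.length = T.dist s t := by
  obtain ⟨q, hq, hql⟩ := hT.connected.exists_path_of_dist s t
  rw [← hql, hT.isAcyclic.eq_of_isPath hp hq]

lemma IsTree.mem_support_iff_dist_add_dist (hT : T.IsTree) {s t : β} {p : T.Walk s t}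
    (hp : p.IsPath) {x : β} : x ∈ p.support ↔ T.dist s x + T.dist x t = T.dist s t := by
  classical
  constructor
  · intro hx
    have := congrArg length (p.take_spec hx)
    rwa [length_append, hT.length_eq_dist hp, hT.length_eq_dist (hp.takeUntil hx),
      hT.length_eq_dist (hp.dropUntil hx)] at this
  · intro hx
    obtain ⟨q₁, -, hq₁⟩ := hT.connected.exists_path_of_dist s x
    obtain ⟨q₂, -, hq₂⟩ := hT.connected.exists_path_of_dist x t
    have hq : (q₁.append q₂).IsPath := isPath_of_length_eq_dist _ (by rw [length_append]; omega)
    rw [hT.isAcyclic.eq_of_isPath hp hq]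
    exact (mem_support_append_iff _ _).mpr (Or.inl q₁.end_mem_support)

/-- `a` is an ancestor of `b` in `T` rooted at `r`: it lies on the path from `r` to `b`. -/
def IsAncestor (T : SimpleGraph β) (r a b : β) : Prop :=
  T.dist r a + T.dist a b = T.dist r b

namespace IsAncestor

variable {r a b c : β}

lemma refl (T : SimpleGraph β) (r a : β) : IsAncestor T r a a := by
  simp [IsAncestor]

lemma eq_of_dist_le (hT : T.Connected) (h : IsAncestor T r a b)
    (hd : T.dist r b ≤ T.dist r a) : a = b :=
  hT.dist_eq_zero_iff.mp (by unfold IsAncestor at h; omega)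

lemma trans (hT : T.Connected) (h₁ : IsAncestor T r a b) (h₂ : IsAncestor T r b c) :
    IsAncestor T r a c := by
  have := hT.dist_triangle (u := a) (v := b) (w := c)
  have := hT.dist_triangle (u := r) (v := a) (w := c)
  unfold IsAncestor at *
  omega

lemma mem_support (hT : T.IsTree) (h₁ : IsAncestor T r a b) (h₂ : IsAncestor T r b c)
    {p : T.Walk a c} (hp : p.IsPath) : b ∈ p.support := by
  rw [hT.mem_support_iff_dist_add_dist hp]
  have := h₁.trans hT.connected h₂
  unfold IsAncestor at *
  omega

lemma total (hT : T.IsTree) (ha : IsAncestor T r a c) (hb : IsAncestor T r b c) :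
    IsAncestor T r a b ∨ IsAncestor T r b a := by
  classical
  obtain ⟨P, hP, -⟩ := hT.connected.exists_path_of_dist r c
  have haP : a ∈ P.support := (hT.mem_support_iff_dist_add_dist hP).mpr ha
  have hbP : b ∈ P.support := (hT.mem_support_iff_dist_add_dist hP).mpr hb
  rw [← P.take_spec haP, mem_support_append_iff] at hbP
  rcases hbP with hb' | hb'
  · have := (hT.mem_support_iff_dist_add_dist (hP.takeUntil haP)).mp hb'
    right
    unfold IsAncestor at *
    omega
  · have := (hT.mem_support_iff_dist_add_dist (hP.dropUntil haP)).mp hb'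
    left
    unfold IsAncestor at *
    omega

lemma of_adj (hT : T.IsTree) (r : β) (h : T.Adj a b) :
    IsAncestor T r a b ∨ IsAncestor T r b a := by
  have := dist_eq_one_iff_adj.mpr h
  have := dist_eq_one_iff_adj.mpr h.symm
  unfold IsAncestor
  rcases hT.dist_eq_dist_add_one_of_adj r h with h' | h' <;> omega

lemma of_walk (hT : T.IsTree) {x : β} (p : T.Walk x b) (ha : IsAncestor T r a x)
    (hp : ∀ y ∈ p.support, T.dist r a ≤ T.dist r y) : IsAncestor T r a b := by
  induction p with
  | nil => exact ha
  | @cons x y z hxy p ih =>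
    refine ih ?_ fun w hw => hp w (List.mem_cons_of_mem _ hw)
    rcases of_adj hT r hxy with hxy' | hyx
    · exact ha.trans hT.connected hxy'
    rcases total hT ha hyx with hay | hya
    · exact hay
    · rw [hya.eq_of_dist_le hT.connected (hp y (List.mem_cons_of_mem _ p.start_mem_support))]
      exact refl T r a

end IsAncestor

end Tree

section ParentGraph

variable {α : Type*} (par : α → α)

def parentGraph : SimpleGraph α := fromRel fun a b => par a = b

variable {par} {ℓ : α → ℕ}

lemma parentGraph_adj_self {a : α} (h : ℓ (par a) < ℓ a) : (parentGraph par).Adj a (par a) :=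
  (fromRel_adj _ _ _).mpr ⟨fun ha => h.ne' (congrArg ℓ ha), Or.inl rfl⟩

lemma exists_walk_parentGraph (S : Set α) (c : α)
    (hS : ∀ a ∈ S, a ≠ c → ℓ (par a) < ℓ a ∧ par a ∈ S) :
    ∀ a ∈ S, ∃ p : (parentGraph par).Walk a c, ∀ x ∈ p.support, x ∈ S := by
  intro a ha
  induction a using (measure ℓ).wf.induction with
  | h a ih =>
    rcases eq_or_ne a c with rfl | hac
    · exact ⟨nil, by simpa using ha⟩
    obtain ⟨hlt, hpa⟩ := hS a ha hac
    obtain ⟨p, hp⟩ := ih (par a) hlt hpa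
    refine ⟨cons (parentGraph_adj_self hlt) p, fun x hx => ?_⟩
    rcases List.mem_cons.mp hx with rfl | hx
    · exact ha
    · exact hp x hx

lemma isTree_parentGraph [Finite α] {root : α} (hroot : par root = root)
    (hℓ : ∀ a ≠ root, ℓ (par a) < ℓ a) : (parentGraph par).IsTree := by
  have hwalk := exists_walk_parentGraph Set.univ root fun a _ ha => ⟨hℓ a ha, trivial⟩
  have : Nonempty α := ⟨root⟩
  have hconn : (parentGraph par).Connected :=
    ⟨fun a b => (hwalk a trivial).choose.reachable.trans
      (hwalk b trivial).choose.reachable.symm⟩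
  -- every edge joins a unique non-root vertex to its parent
  let f : ({root}ᶜ : Set α) → (parentGraph par).edgeSet := fun a =>
    ⟨s(a, par a), parentGraph_adj_self (hℓ a a.2)⟩
  have hf : Function.Bijective f := by
    constructor
    · intro a b hab
      rcases Sym2.eq_iff.mp (congrArg Subtype.val hab) with ⟨hab, -⟩ | ⟨hab, hba⟩
      · exact Subtype.ext hab
      · have ha := hℓ a a.2
        have hb := hℓ b b.2
        rw [hba] at ha
        rw [← hab] at hb
        omega
    · rintro ⟨e, he⟩
      induction e using Sym2.ind with
      | h x y =>
        obtain ⟨hxy, hpar | hpar⟩ := (fromRel_adj _ _ _).mp ((mem_edgeSet _).mp he)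
        · refine ⟨⟨x, fun hx => hxy ?_⟩, Subtype.ext (by simp [f, hpar])⟩
          rw [← hpar, Set.mem_singleton_iff.mp hx, hroot]
        · refine ⟨⟨y, fun hy => hxy ?_⟩, Subtype.ext (by simp [f, hpar, Sym2.eq_swap])⟩
          rw [← hpar, Set.mem_singleton_iff.mp hy, hroot]
  rw [isTree_iff_connected_and_card, ← Nat.card_congr (Equiv.ofBijective f hf),
    Nat.card_coe_set_eq, ← Set.ncard_add_ncard_compl {root}, Set.ncard_singleton, add_comm]
  exact ⟨hconn, rfl⟩

end ParentGraph

end SimpleGraph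

lemma exists_embedding_nat_forall_le_imp_le {α : Type*} [Finite α] (f : α → ℕ) :
    ∃ L : α ↪ ℕ, ∀ a b, L a ≤ L b → f a ≤ f b := by
  set n := Nat.card α
  set e := Finite.equivFin α
  have hlex : ∀ a b, f a < f b → f a * n + e a < f b * n + e b := fun a b h =>
    calc f a * n + e a < (f a + 1) * n := by
          rw [add_one_mul]; exact Nat.add_lt_add_left (e a).isLt _
      _ ≤ f b * n + e b := (Nat.mul_le_mul_right n h).trans (Nat.le_add_right _ _)
  have hmono : ∀ a b, f a * n + e a ≤ f b * n + e b → f a ≤ f b := fun a b h =>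
    not_lt.mp fun h' => (hlex b a h').not_ge h
  refine ⟨⟨fun a => f a * n + e a, fun a b hab => ?_⟩, hmono⟩
  have hf : f a = f b := (hmono a b hab.le).antisymm (hmono b a hab.ge)
  simp only [hf, Nat.add_left_cancel_iff, Fin.val_inj] at hab
  exact e.injective hab

section TopBag

variable {G : SimpleGraph V} {β : Type} {T : SimpleGraph β} {bag : β → Set V}

lemma IsTreeDecomp.exists_top (h : IsTreeDecomp G T bag) (r : β) :
    ∃ top : V → β, (∀ v, v ∈ bag (top v)) ∧
      ∀ v s, v ∈ bag s → T.IsAncestor r (top v) s := by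
  obtain ⟨hT, hcov, -, hcoh⟩ := h
  let top v := Function.argminOn (T.dist r) {t | v ∈ bag t} (hcov v)
  have htop v : v ∈ bag (top v) := Function.argminOn_mem (T.dist r) {t | v ∈ bag t} (hcov v)
  refine ⟨top, htop, fun v s hs => ?_⟩
  obtain ⟨p, hp, -⟩ := hT.connected.exists_path_of_dist (top v) s
  refine IsAncestor.of_walk hT p (IsAncestor.refl T r _) fun y hy => ?_
  exact Function.argminOn_le (T.dist r) {t | v ∈ bag t} (hcoh v _ _ (htop v) hs p hp y hy)

variable {r : β} {top : V → β}

/-- Consecutive vertices of the walk share a bag below `top v`, so the top bag of the next vertex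
is comparable with `top v`: it lies below `top v`, or above it and then equal to it, unless that
vertex is the endpoint, which then lies in `top v` by the subtree property. -/
lemma mem_bag_top_of_walk (h : IsTreeDecomp G T bag) (htop : ∀ v, v ∈ bag (top v))
    (hanc : ∀ v s, v ∈ bag s → T.IsAncestor r (top v) s) {v x z : V} (q : G.Walk x z)
    (hx : T.IsAncestor r (top v) (top x))
    (hq : ∀ w ∈ q.support, w ≠ z → T.dist r (top v) ≤ T.dist r (top w))
    (hz : T.dist r (top z) ≤ T.dist r (top v)) : z ∈ bag (top v) := by
  obtain ⟨hT, -, hedge, hcoh⟩ := h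
  induction q with
  | nil => exact hx.eq_of_dist_le hT.connected hz ▸ htop _
  | @cons x y z hxy q ih =>
    obtain ⟨s, hxs, hys⟩ := hedge hxy
    have hvs : T.IsAncestor r (top v) s := hx.trans hT.connected (hanc x s hxs)
    have hq' : ∀ w ∈ q.support, w ≠ z → T.dist r (top v) ≤ T.dist r (top w) :=
      fun w hw => hq w (List.mem_cons_of_mem _ hw)
    rcases IsAncestor.total hT hvs (hanc y s hys) with hvy | hyv
    · exact ih hvy hq' hz
    by_cases hyz : y = z
    · subst hyz
      obtain ⟨p, hp, -⟩ := hT.connected.exists_path_of_dist (top y) s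
      exact hcoh y _ _ (htop y) hys p hp _ (hyv.mem_support hT hvs hp)
    · have hyv' := hyv.eq_of_dist_le hT.connected
        (hq y (List.mem_cons_of_mem _ q.start_mem_support) hyz)
      exact ih (hyv' ▸ IsAncestor.refl T r _) hq' hz

lemma sReach_subset_bag_top (h : IsTreeDecomp G T bag) (htop : ∀ v, v ∈ bag (top v))
    (hanc : ∀ v s, v ∈ bag s → T.IsAncestor r (top v) s) {L : V ↪ ℕ}
    (hL : ∀ a b, L a ≤ L b → T.dist r (top a) ≤ T.dist r (top b)) (ρ : ℕ) (v : V) :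
    SReach G L ρ v ⊆ bag (top v) := by
  rintro u ⟨p, -, -, hu, hint⟩
  refine mem_bag_top_of_walk h htop hanc p (.refl T r _) (fun w hw hwu => ?_) (hL u v hu)
  rcases eq_or_ne w v with rfl | hwv
  · exact le_rfl
  · exact hL v w (hint w hw hwv hwu).le

end TopBag

lemma gcol_le_of_hasTreewidthLE [Finite V] {G : SimpleGraph V} {k : ℕ} (h : HasTreewidthLE G k)
    (ρ : ℕ) : gcol G ρ ≤ k + 1 := by
  obtain ⟨β, T, bag, hdec, hwidth⟩ := h
  obtain ⟨r⟩ := hdec.1.connected.nonempty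
  obtain ⟨top, htop, hanc⟩ := hdec.exists_top r
  obtain ⟨L, hL⟩ := exists_embedding_nat_forall_le_imp_le fun v => T.dist r (top v)
  refine Nat.sInf_le ⟨L, fun v => ?_⟩
  exact (Set.ncard_le_ncard (sReach_subset_bag_top hdec htop hanc hL ρ v)).trans (hwidth _)

lemma isTreeDecomp_parentGraph {α : Type} [Finite α] {G : SimpleGraph V} {par : α → α}
    {ℓ : α → ℕ} {root : α} (hroot : par root = root)
    (hℓ : ∀ a ≠ root, ℓ (par a) < ℓ a)
    {bag : α → Set V} {home : V → α} (hhome : ∀ v, v ∈ bag (home v))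
    (hup : ∀ v a, v ∈ bag a → a ≠ home v → a ≠ root ∧ v ∈ bag (par a))
    (hadj : ∀ ⦃u v⦄, G.Adj u v → ∃ a, u ∈ bag a ∧ v ∈ bag a) :
    IsTreeDecomp G (parentGraph par) bag := by
  have hT := isTree_parentGraph hroot hℓ
  refine ⟨hT, fun v => ⟨home v, hhome v⟩, hadj, fun v t₁ t₂ h₁ h₂ p hp t ht => ?_⟩
  have hwalk := exists_walk_parentGraph {a | v ∈ bag a} (home v) fun a ha hne =>
    ⟨hℓ a (hup v a ha hne).1, (hup v a ha hne).2⟩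
  obtain ⟨q₁, hq₁⟩ := hwalk t₁ h₁
  obtain ⟨q₂, hq₂⟩ := hwalk t₂ h₂
  have ht' := hT.isAcyclic.support_subset_of_isPath hp (q₁.append q₂.reverse) ht
  rw [mem_support_append_iff, support_reverse, List.mem_reverse] at ht'
  exact ht'.elim (hq₁ t) (hq₂ t)

section StrongReach

variable {G : SimpleGraph V} {L : V ↪ ℕ}

lemma mem_sReach_self (ρ : ℕ) (v : V) : v ∈ SReach G L ρ v :=
  ⟨nil, .nil, Nat.zero_le _, le_rfl, fun _ hw hwv _ => (hwv (by simpa using hw)).elim⟩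

lemma le_of_mem_sReach {ρ : ℕ} {u v : V} (h : u ∈ SReach G L ρ v) : L u ≤ L v :=
  h.choose_spec.2.2.1

lemma lt_of_mem_sReach {ρ : ℕ} {u v : V} (h : u ∈ SReach G L ρ v) (huv : u ≠ v) :
    L u < L v :=
  (le_of_mem_sReach h).lt_of_ne (L.injective.ne huv)

variable [Fintype V]

lemma mem_sReach_card_of_isPath {u v : V} {p : G.Walk v u} (hp : p.IsPath) (hu : L u ≤ L v)
    (hint : ∀ w ∈ p.support, w ≠ v → w ≠ u → L v < L w) :
    u ∈ SReach G L (Fintype.card V) v :=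
  ⟨p, hp, hp.length_lt.le, hu, hint⟩

lemma mem_sReach_card_of_adj {u v : V} (h : G.Adj v u) (hu : L u ≤ L v) :
    u ∈ SReach G L (Fintype.card V) v :=
  mem_sReach_card_of_isPath (p := cons h nil) (IsPath.nil.cons (by simpa using h.ne)) hu
    fun w hw hwv hwu => by simp_all

/-- The walk from `u` back to `v` and on to `w` visits, besides its ends, only `v` and vertices
later than `v`; the radius `card V` bounds no path. -/
lemma mem_sReach_card_of_mem_sReach {u v w : V} (hu : u ∈ SReach G L (Fintype.card V) v)
    (huv : u ≠ v) (hw : w ∈ SReach G L (Fintype.card V) v) (hwu : L w ≤ L u) :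
    w ∈ SReach G L (Fintype.card V) u := by
  classical
  have hlt := lt_of_mem_sReach hu huv
  obtain ⟨q, -, -, -, hq⟩ := hu
  obtain ⟨p, -, -, -, hp⟩ := hw
  refine mem_sReach_card_of_isPath (q.reverse.append p).bypass_isPath hwu fun x hx hxu hxw => ?_
  rcases eq_or_ne x v with rfl | hxv
  · exact hlt
  have hx' := (q.reverse.append p).support_bypass_subset_support hx
  rw [mem_support_append_iff, support_reverse, List.mem_reverse] at hx'
  rcases hx' with hx' | hx'
  · exact hlt.trans (hq x hx' hxv hxu)
  · exact hlt.trans (hp x hx' hxv hxw)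

lemma exists_sReach_parent {v₀ : V} (hv₀ : ∀ v, L v₀ ≤ L v) :
    ∃ par : V → V, par v₀ = v₀ ∧ (∀ x ≠ v₀, L (par x) < L x) ∧
      ∀ x, ∀ w ∈ SReach G L (Fintype.card V) x, w ≠ x →
        w ∈ SReach G L (Fintype.card V) (par x) := by
  have : ∀ x, ∃ p, (x = v₀ → p = v₀) ∧ (x ≠ v₀ → L p < L x) ∧
      ∀ w ∈ SReach G L (Fintype.card V) x, w ≠ x → w ∈ SReach G L (Fintype.card V) p := by
    intro x
    by_cases hA : (SReach G L (Fintype.card V) x \ {x}).Nonempty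
    · obtain ⟨p, ⟨hp, hpx⟩, hmax⟩ :=
        Set.exists_max_image _ (fun w => L w) (Set.toFinite _) hA
      have hlt := lt_of_mem_sReach hp hpx
      refine ⟨p, fun hx => (hlt.not_ge (hx ▸ hv₀ p)).elim, fun _ => hlt, fun w hw hwx => ?_⟩
      exact mem_sReach_card_of_mem_sReach hp hpx hw (hmax w ⟨hw, hwx⟩)
    · refine ⟨v₀, fun _ => rfl, fun hx => (hv₀ x).lt_of_ne (L.injective.ne (Ne.symm hx)),
        fun w hw hwx => (hA ⟨w, hw, hwx⟩).elim⟩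
  choose par hroot hlt hup using this
  exact ⟨par, hroot v₀ rfl, hlt, hup⟩

end StrongReach

lemma hasTreewidthLE_of_forall_sReach_ncard_le [Fintype V] [Nonempty V] {G : SimpleGraph V}
    {L : V ↪ ℕ} {k : ℕ} (hL : ∀ v, (SReach G L (Fintype.card V) v).ncard ≤ k + 1) :
    HasTreewidthLE G k := by
  obtain ⟨v₀, -, hv₀⟩ :=
    Finset.exists_min_image Finset.univ (fun v => L v) Finset.univ_nonempty
  obtain ⟨par, hroot, hpar, hup⟩ := exists_sReach_parent (G := G) (hv₀ · (Finset.mem_univ _))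
  let e := Fintype.equivFin V
  refine ⟨Fin (Fintype.card V), parentGraph (e ∘ par ∘ e.symm),
    fun a => SReach G L (Fintype.card V) (e.symm a),
    isTreeDecomp_parentGraph (ℓ := fun a => L (e.symm a)) (root := e v₀) (home := e)
      ?_ ?_ ?_ ?_ ?_, fun a => hL _⟩
  · simp [hroot]
  · intro a ha
    simpa using hpar _ (e.symm_apply_eq.not.mpr ha)
  · simpa using mem_sReach_self (G := G) (L := L) _
  · intro v a hv hva
    have hne : v ≠ e.symm a := fun h => hva (by simp [h])
    refine ⟨fun ha => ?_, by simpa using hup _ v hv hne⟩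
    subst ha
    simp only [Equiv.symm_apply_apply] at hv hne
    exact (lt_of_mem_sReach hv hne).not_ge (hv₀ v (Finset.mem_univ v))
  · intro u v huv
    rcases (L.injective.ne huv.ne).lt_or_gt with h | h
    · refine ⟨e v, ?_⟩
      simpa using And.intro (mem_sReach_card_of_adj huv.symm h.le) (mem_sReach_self _ v)
    · refine ⟨e u, ?_⟩
      simpa using And.intro (mem_sReach_self _ u) (mem_sReach_card_of_adj huv h.le)

lemma exists_forall_sReach_ncard_le_gcol [Finite V] (G : SimpleGraph V) (ρ : ℕ) :
    ∃ L : V ↪ ℕ, ∀ v, (SReach G L ρ v).ncard ≤ gcol G ρ :=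
  Nat.sInf_mem (s := {k | ∃ L : V ↪ ℕ, ∀ v, (SReach G L ρ v).ncard ≤ k})
    ⟨Nat.card V, (Finite.equivFin V).toEmbedding.trans Fin.valEmbedding,
      fun _ => Set.ncard_le_card _⟩

/-- col_n(G) = tw(G) + 1 for an n-vertex graph G. -/
theorem col_card_eq_treewidth_add_one [Fintype V] [Nonempty V] (G : SimpleGraph V) :
    gcol G (Fintype.card V) = treewidth G + 1 := by
  obtain ⟨L, hL⟩ := exists_forall_sReach_ncard_le_gcol G (Fintype.card V)
  have hpos : 0 < gcol G (Fintype.card V) :=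
    ((Set.ncard_pos (Set.toFinite _)).mpr ⟨_, mem_sReach_self (G := G) (L := L) _ _⟩).trans_le
      (hL (Classical.arbitrary V))
  have hcol : HasTreewidthLE G (gcol G (Fintype.card V) - 1) :=
    hasTreewidthLE_of_forall_sReach_ncard_le fun v => (hL v).trans (by omega)
  have htw : HasTreewidthLE G (treewidth G) :=
    Nat.sInf_mem (s := {k | HasTreewidthLE G k}) ⟨_, hcol⟩
  have hle : gcol G (Fintype.card V) ≤ treewidth G + 1 := gcol_le_of_hasTreewidthLE htw _
  have hge : treewidth G ≤ gcol G (Fintype.card V) - 1 := Nat.sInf_le hcol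
  omega
end

section
/- If a graph G has treewidth at most k, then for every r ∈ ℕ, wcol_r(G) ≤ binom(r+k, k). -/
/-!
Root a tree decomposition of width `k` and order the vertices by the depth of their highest bag.
If `x` precedes `y` and both lie in some bag, then `x` lies in the highest bag of `y`, because both
highest bags lie on the path from that bag to the root. Hence the set `back y` of vertices of the
highest bag of `y` preceding `y` has at most `k` elements, contains the earlier neighbours of `y`,
and the sets `back y` are the cliques of a perfect elimination order. Using them as shortcuts,
every vertex weakly `r`-reachable from `v` is reached by a descending chain of at most `r` steps
into `back`. These chains are counted by induction on their length, excluding everything reachable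
from a set `A ⊆ back y`: at most `(s + j).choose j` vertices remain whenever `k ≤ j + #A`. In the
step, the latest vertex `z` of `back y \ A` is charged only for what is not reachable from `A` or
from the earlier vertices of `back y \ A`; these lie in `back z`, unless `z` itself lies in `back a`
for some `a ∈ A`, and Pascal's rule adds up the resulting bounds.
-/

open SimpleGraph

variable {V : Type*}

open Finset

/-- `L` is a perfect elimination order of the graph in which `back y` is the set of neighbours of
`y` preceding it. -/
def IsPerfectElimination (L : V ↪ ℕ) (back : V → Finset V) : Prop :=
  ∀ y, ∀ a ∈ back y, ∀ b ∈ back y, L a < L b → a ∈ back b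

section BackReach

variable [DecidableEq V] {back : V → Finset V}

def backReach (back : V → Finset V) : ℕ → V → Finset V
  | 0, v => {v}
  | s + 1, v => insert v ((back v).biUnion (backReach back s))

lemma mem_backReach_self (s : ℕ) (v : V) : v ∈ backReach back s v := by
  cases s <;> simp [backReach]

lemma backReach_subset_of_mem {s : ℕ} {v w : V} (h : w ∈ back v) :
    backReach back s w ⊆ backReach back (s + 1) v :=
  fun _ hu => mem_insert_of_mem (mem_biUnion.2 ⟨w, h, hu⟩)

lemma backReach_subset_succ (s : ℕ) (v : V) : backReach back s v ⊆ backReach back (s + 1) v := by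
  induction s generalizing v with
  | zero => simp [backReach]
  | succ s ih => exact insert_subset_insert _ (biUnion_mono fun w _ => ih w)

lemma backReach_mono {s s' : ℕ} (h : s ≤ s') (v : V) :
    backReach back s v ⊆ backReach back s' v :=
  monotone_nat_of_le_succ (f := (backReach back · v)) (fun s => backReach_subset_succ s v) h

variable {L : V ↪ ℕ}

lemma mem_backReach_of_mem_back (hlt : ∀ v, ∀ u ∈ back v, L u < L v)
    (hpeo : IsPerfectElimination L back)
    {s : ℕ} {u v x : V} (hv : v ∈ back x) (hu : L u ≤ L v) (h : u ∈ backReach back s x) :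
    u ∈ backReach back s v := by
  induction s generalizing x with
  | zero =>
    rw [backReach, mem_singleton] at h
    subst h
    exact absurd (hlt u v hv) (by omega)
  | succ s ih =>
    rcases mem_insert.1 h with rfl | h
    · exact absurd (hlt u v hv) (by omega)
    obtain ⟨c, hc, hu⟩ := mem_biUnion.1 h
    rcases lt_trichotomy (L c) (L v) with hcv | hcv | hcv
    · exact backReach_subset_of_mem (hpeo x c hc v hv hcv) hu
    · exact L.injective hcv ▸ backReach_subset_succ s c hu
    · exact backReach_subset_succ s v (ih (hpeo x v hv c hc hcv) hu)

lemma mem_backReach_succ_of_adj {G : SimpleGraph V} (hlt : ∀ v, ∀ u ∈ back v, L u < L v)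
    (hpeo : IsPerfectElimination L back)
    (hadj : ∀ ⦃u v⦄, G.Adj u v → L u < L v → u ∈ back v)
    {s : ℕ} {u v x : V} (hvx : G.Adj v x) (hu : L u ≤ L v) (h : u ∈ backReach back s x) :
    u ∈ backReach back (s + 1) v := by
  rcases lt_or_gt_of_ne (L.injective.ne hvx.ne) with hLvx | hLxv
  · exact backReach_subset_succ s v (mem_backReach_of_mem_back hlt hpeo (hadj hvx hLvx) hu h)
  · exact backReach_subset_of_mem (hadj hvx.symm hLxv) h

lemma mem_backReach_length_of_walk {G : SimpleGraph V} (hlt : ∀ v, ∀ u ∈ back v, L u < L v)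
    (hpeo : IsPerfectElimination L back)
    (hadj : ∀ ⦃u v⦄, G.Adj u v → L u < L v → u ∈ back v)
    {u v : V} (p : G.Walk v u) (hp : ∀ w ∈ p.support, L u ≤ L w) :
    u ∈ backReach back p.length v := by
  induction p with
  | nil => exact mem_backReach_self 0 _
  | cons hvx p ih =>
    simp only [Walk.support_cons, List.mem_cons, forall_eq_or_imp] at hp
    exact mem_backReach_succ_of_adj hlt hpeo hadj hvx hp.1 (ih hp.2)

lemma wReach_subset_backReach {G : SimpleGraph V} (hlt : ∀ v, ∀ u ∈ back v, L u < L v)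
    (hpeo : IsPerfectElimination L back)
    (hadj : ∀ ⦃u v⦄, G.Adj u v → L u < L v → u ∈ back v) (r : ℕ) (v : V) :
    WReach G L r v ⊆ backReach back r v := by
  rintro u ⟨p, -, hlen, hmin⟩
  exact backReach_mono hlen v (mem_backReach_length_of_walk hlt hpeo hadj p hmin)

variable {k : ℕ}

lemma card_backReach_sdiff_le_of_forall_le
    (hpeo : IsPerfectElimination L back) {s j : ℕ}
    (ih : ∀ y A j, A ⊆ back y → k ≤ j + #A →
      #(backReach back s y \ A.biUnion (backReach back s)) ≤ (s + j).choose j)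
    {y z : V} {A Z : Finset V} (hA : A ⊆ back y) (hz : z ∈ back y) (hZ : Z ⊆ back y)
    (hAZ : Disjoint A (insert z Z)) (hzZ : z ∉ Z) (hmax : ∀ x ∈ Z, L x ≤ L z)
    (hk : k ≤ j + #A + #Z) :
    #(backReach back s z \ (A.biUnion (backReach back (s + 1)) ∪ Z.biUnion (backReach back s)))
      ≤ (s + j).choose j := by
  -- If some excluded `a` comes after `z`, then `z ∈ back a` and all of `backReach back s z` is
  -- excluded; otherwise `A ∪ Z` consists of earlier neighbours of `z`.
  by_cases habove : ∃ a ∈ A, L z < L a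
  · obtain ⟨a, ha, hza⟩ := habove
    have hsub : backReach back s z ⊆ A.biUnion (backReach back (s + 1)) := fun x hx =>
      mem_biUnion.2 ⟨a, ha, backReach_subset_of_mem (hpeo y z hz a (hA ha) hza) hx⟩
    simp [sdiff_eq_empty_iff_subset.2 (hsub.trans subset_union_left)]
  push Not at habove
  obtain ⟨hzA, hAZ⟩ := disjoint_insert_right.1 hAZ
  have hback : A ∪ Z ⊆ back z := by
    intro b hb
    have hbz : b ≠ z := by rintro rfl; exact (mem_union.1 hb).elim hzA hzZ
    have hle : L b ≤ L z := (mem_union.1 hb).elim (habove b) (hmax b)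
    exact hpeo y b (union_subset hA hZ hb) z hz (lt_of_le_of_ne hle (L.injective.ne hbz))
  have hsub : backReach back s z \ (A.biUnion (backReach back (s + 1)) ∪
      Z.biUnion (backReach back s)) ⊆ backReach back s z \ (A ∪ Z).biUnion (backReach back s) := by
    rw [union_biUnion]
    exact sdiff_subset_sdiff subset_rfl
      (union_subset_union (biUnion_mono fun a _ => backReach_subset_succ s a) subset_rfl)
  calc _ ≤ _ := card_le_card hsub
    _ ≤ _ := ih z (A ∪ Z) j hback (by rw [card_union_of_disjoint hAZ]; omega)

/-- Processing `Z` from its latest vertex down, the vertex with `i` later ones in `Z` contributes at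
most `(s + q + 1 + i).choose (q + 1 + i)`; the summand `(s + 1 + q).choose q` lets Pascal's rule
telescope this sum. -/
lemma card_biUnion_sdiff_add_choose_le
    (hpeo : IsPerfectElimination L back) {s : ℕ}
    (ih : ∀ y A j, A ⊆ back y → k ≤ j + #A →
      #(backReach back s y \ A.biUnion (backReach back s)) ≤ (s + j).choose j)
    {y : V} {A : Finset V} (hA : A ⊆ back y) (Z : Finset V) (hZ : Z ⊆ back y)
    (hAZ : Disjoint A Z) (q : ℕ) (hk : k ≤ q + #Z + #A) :
    #(Z.biUnion (backReach back s) \ A.biUnion (backReach back (s + 1))) + (s + 1 + q).choose q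
      ≤ (s + 1 + q + #Z).choose (q + #Z) := by
  induction Z using Finset.induction_on_max_value L generalizing q with
  | empty => simp
  | insert z Z hzZ hmax ihZ =>
    set U := A.biUnion (backReach back (s + 1))
    set W := Z.biUnion (backReach back s)
    rw [card_insert_of_notMem hzZ] at hk ⊢
    have hsplit : (insert z Z).biUnion (backReach back s) \ U ⊆
        (backReach back s z \ (U ∪ W)) ∪ (W \ U) := by
      intro x
      simp only [biUnion_insert, mem_sdiff, mem_union]
      tauto
    have hZ' : Z ⊆ back y := (subset_insert z Z).trans hZ
    have htop : #(backReach back s z \ (U ∪ W)) ≤ (s + (q + 1)).choose (q + 1) :=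
      card_backReach_sdiff_le_of_forall_le hpeo ih hA (hZ (mem_insert_self z Z)) hZ' hAZ hzZ
        hmax (by omega)
    have hrest := ihZ hZ' (disjoint_insert_right.1 hAZ).2 (q + 1) (by omega)
    have hpascal : (s + (q + 1)).choose (q + 1) + (s + 1 + q).choose q
        = (s + 1 + (q + 1)).choose (q + 1) := by
      rw [show s + 1 + (q + 1) = (s + 1 + q) + 1 by omega, Nat.choose_succ_succ',
        show s + (q + 1) = s + 1 + q by omega, add_comm]
    calc _ ≤ #(backReach back s z \ (U ∪ W)) + #(W \ U) + (s + 1 + q).choose q := by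
          gcongr
          exact (card_le_card hsplit).trans (card_union_le _ _)
      _ ≤ (s + 1 + (q + 1)).choose (q + 1) + #(W \ U) := by omega
      _ ≤ _ := by
          rw [show s + 1 + q + (#Z + 1) = s + 1 + (q + 1) + #Z by omega,
            show q + (#Z + 1) = q + 1 + #Z by omega]
          omega

theorem card_backReach_sdiff_le
    (hpeo : IsPerfectElimination L back)
    (hcard : ∀ v, #(back v) ≤ k) (s : ℕ) :
    ∀ y A j, A ⊆ back y → k ≤ j + #A →
      #(backReach back s y \ A.biUnion (backReach back s)) ≤ (s + j).choose j := by
  induction s with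
  | zero =>
    intro y A j _ _
    calc _ ≤ #(backReach back 0 y) := card_le_card sdiff_subset
      _ = 1 := card_singleton y
      _ ≤ _ := by simp
  | succ s ih =>
    intro y A j hA hk
    set Z := back y \ A
    have hZ : #Z + #A = #(back y) := card_sdiff_add_card_eq_card hA
    obtain ⟨q, rfl⟩ : ∃ q, j = q + #Z := ⟨j - #Z, by have := hcard y; omega⟩
    have hsub : backReach back (s + 1) y \ A.biUnion (backReach back (s + 1)) ⊆
        insert y (Z.biUnion (backReach back s) \ A.biUnion (backReach back (s + 1))) := by
      intro x hx
      obtain ⟨hx, hxA⟩ := mem_sdiff.1 hx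
      rcases mem_insert.1 hx with rfl | hx
      · exact mem_insert_self _ _
      obtain ⟨w, hw, hxw⟩ := mem_biUnion.1 hx
      have hwA : w ∉ A := fun hwA => hxA (mem_biUnion.2 ⟨w, hwA, backReach_subset_succ s w hxw⟩)
      exact mem_insert_of_mem (mem_sdiff.2 ⟨mem_biUnion.2 ⟨w, mem_sdiff.2 ⟨hw, hwA⟩, hxw⟩, hxA⟩)
    have hmain := card_biUnion_sdiff_add_choose_le hpeo ih hA Z sdiff_subset
      disjoint_sdiff q (by omega)
    have hpos : 0 < (s + 1 + q).choose q := Nat.choose_pos (by omega)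
    calc _ ≤ #(insert y (Z.biUnion (backReach back s) \ A.biUnion (backReach back (s + 1)))) :=
          card_le_card hsub
      _ ≤ _ := card_insert_le _ _
      _ ≤ (s + 1 + q + #Z).choose (q + #Z) := by omega
      _ = _ := by rw [add_assoc]

theorem card_backReach_le
    (hpeo : IsPerfectElimination L back)
    (hcard : ∀ v, #(back v) ≤ k) (s : ℕ) (v : V) :
    #(backReach back s v) ≤ (s + k).choose k := by
  simpa using card_backReach_sdiff_le hpeo hcard s v ∅ k (empty_subset _) (by simp)

theorem wcol_le_choose_of_back {G : SimpleGraph V} (hlt : ∀ v, ∀ u ∈ back v, L u < L v)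
    (hpeo : IsPerfectElimination L back)
    (hadj : ∀ ⦃u v⦄, G.Adj u v → L u < L v → u ∈ back v) (hcard : ∀ v, #(back v) ≤ k)
    (r : ℕ) : wcol G r ≤ (r + k).choose k := by
  refine Nat.sInf_le ⟨L, fun v => ?_⟩
  calc (WReach G L r v).ncard ≤ (backReach back r v : Set V).ncard :=
        Set.ncard_le_ncard (wReach_subset_backReach hlt hpeo hadj r v) (finite_toSet _)
    _ = #(backReach back r v) := Set.ncard_coe_finset _
    _ ≤ _ := card_backReach_le hpeo hcard r v

end BackReach

lemma exists_embedding_nat_le_of_lt {α : Type*} [Finite α] (f : α → ℕ) :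
    ∃ L : α ↪ ℕ, ∀ a b, L a < L b → f a ≤ f b := by
  obtain ⟨N, ⟨e⟩⟩ := Finite.exists_equiv_fin α
  have hdiv : ∀ a, (N * f a + e a) / N = f a := fun a => by
    rw [Nat.mul_add_div (Fin.pos (e a)), Nat.div_eq_of_lt (e a).2, add_zero]
  have hmod : ∀ a, (N * f a + e a) % N = e a := fun a => by
    rw [Nat.mul_add_mod, Nat.mod_eq_of_lt (e a).2]
  refine ⟨⟨fun a => N * f a + e a, fun a b hab => e.injective (Fin.ext ?_)⟩, fun a b hab => ?_⟩
  · simpa only [hmod] using congrArg (· % N) hab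
  · have hle : N * f a + e a ≤ N * f b + e b := hab.le
    simpa only [hdiv] using Nat.div_le_div_right (c := N) hle

namespace SimpleGraph

variable {β : Type*} {T : SimpleGraph β}

def IsPathClosed (T : SimpleGraph β) (S : Set β) : Prop :=
  ∀ t₁ t₂, t₁ ∈ S → t₂ ∈ S → ∀ p : T.Walk t₁ t₂, p.IsPath → ∀ t ∈ p.support, t ∈ S

lemma dist_lt_of_mem_support_of_length_eq_dist {u v w : β} (q : T.Walk u v)
    (hq : q.length = T.dist u v) (hw : w ∈ q.support) (hwu : w ≠ u) :
    T.dist w v < T.dist u v := by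
  classical
  have hsplit := congrArg Walk.length (q.take_spec hw)
  rw [Walk.length_append] at hsplit
  have hdrop : T.dist w v ≤ (q.dropUntil w hw).length := dist_le _
  have htake : (q.takeUntil w hw).length ≠ 0 := fun h => hwu (Walk.eq_of_length_eq_zero h).symm
  omega

lemma isPath_append_of_dist_le {t m r : β} {p : T.Walk t m} {q : T.Walk m r} (hp : p.IsPath)
    (hq : q.IsPath) (hqlen : q.length = T.dist m r)
    (hpfar : ∀ w ∈ p.support, T.dist m r ≤ T.dist w r) : (p.append q).IsPath := by
  have hm : m ∉ q.support.tail := by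
    have := hq.support_nodup
    rw [← q.cons_tail_support, List.nodup_cons] at this
    exact this.1
  rw [Walk.isPath_def, Walk.support_append, List.nodup_append]
  refine ⟨hp.support_nodup, hq.support_nodup.sublist (List.tail_sublist _), ?_⟩
  rintro w hwp _ hwq rfl
  have := dist_lt_of_mem_support_of_length_eq_dist q hqlen (List.mem_of_mem_tail hwq)
    (ne_of_mem_of_not_mem hwq hm)
  exact absurd (hpfar w hwp) (by omega)

lemma IsTree.exists_append_isPath_of_dist_le (hT : T.IsTree) {S : Set β} (hS : IsPathClosed T S)
    {t m r : β} (ht : t ∈ S) (hm : m ∈ S) (hmin : ∀ x ∈ S, T.dist m r ≤ T.dist x r) :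
    ∃ (p : T.Walk t m) (q : T.Walk m r), (∀ w ∈ p.support, w ∈ S) ∧ q.length = T.dist m r ∧
      (p.append q).IsPath := by
  obtain ⟨p, hp, -⟩ := hT.existsUnique_path t m
  obtain ⟨q, hq, hqlen⟩ := hT.connected.exists_path_of_dist m r
  have hpS : ∀ w ∈ p.support, w ∈ S := hS t m ht hm p hp
  exact ⟨p, q, hpS, hqlen,
    isPath_append_of_dist_le hp hq hqlen fun w hw => hmin w (hpS w hw)⟩

theorem IsTree.mem_of_dist_le (hT : T.IsTree) {S₁ S₂ : Set β} (hS₁ : IsPathClosed T S₁)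
    (hS₂ : IsPathClosed T S₂) {t m₁ m₂ r : β} (ht₁ : t ∈ S₁) (ht₂ : t ∈ S₂) (hm₁ : m₁ ∈ S₁)
    (hm₂ : m₂ ∈ S₂) (hmin₁ : ∀ x ∈ S₁, T.dist m₁ r ≤ T.dist x r)
    (hmin₂ : ∀ x ∈ S₂, T.dist m₂ r ≤ T.dist x r) (hle : T.dist m₁ r ≤ T.dist m₂ r) :
    m₂ ∈ S₁ := by
  -- Both minima lie on the unique path from `t` to `r`, which reaches `m₂` before `m₁`.
  obtain ⟨p₁, q₁, hp₁, hq₁, hpath₁⟩ := hT.exists_append_isPath_of_dist_le hS₁ ht₁ hm₁ hmin₁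
  obtain ⟨p₂, q₂, -, -, hpath₂⟩ := hT.exists_append_isPath_of_dist_le hS₂ ht₂ hm₂ hmin₂
  have hm₂P : m₂ ∈ (p₁.append q₁).support := by
    rw [(hT.existsUnique_path t r).unique hpath₁ hpath₂]
    exact (Walk.mem_support_append_iff _ _).2 (.inl p₂.end_mem_support)
  rcases (Walk.mem_support_append_iff _ _).1 hm₂P with h | h
  · exact hp₁ m₂ h
  by_cases hm : m₂ = m₁
  · exact hm ▸ hm₁
  exact absurd (dist_lt_of_mem_support_of_length_eq_dist q₁ hq₁ h hm) (by omega)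

end SimpleGraph

theorem IsTreeDecomp.exists_order [Finite V] {G : SimpleGraph V} {β : Type}
    {T : SimpleGraph β} {bag : β → Set V} (h : IsTreeDecomp G T bag) :
    ∃ (L : V ↪ ℕ) (top : V → β), (∀ v, v ∈ bag (top v)) ∧
      ∀ t x y, x ∈ bag t → y ∈ bag t → L x < L y → x ∈ bag (top y) := by
  obtain ⟨hT, hcov, -, hclosed⟩ := h
  obtain ⟨r⟩ := hT.connected.nonempty
  have hexists : ∀ v, ∃ t, v ∈ bag t ∧ ∀ t', v ∈ bag t' → T.dist t r ≤ T.dist t' r := fun v => by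
    obtain ⟨t, ht, hmin⟩ :=
      exists_minimalFor_of_wellFoundedLT (fun t => v ∈ bag t) (T.dist · r) (hcov v)
    exact ⟨t, ht, fun t' ht' => (le_total _ _).elim (hmin ht') id⟩
  choose top htop hmin using hexists
  obtain ⟨L, hL⟩ := exists_embedding_nat_le_of_lt fun v => T.dist (top v) r
  exact ⟨L, top, htop, fun t x y hx hy hxy => hT.mem_of_dist_le (S₁ := {t | x ∈ bag t})
    (S₂ := {t | y ∈ bag t}) (hclosed x) (hclosed y) hx hy (htop x) (htop y) (hmin x) (hmin y)
    (hL x y hxy)⟩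

theorem HasTreewidthLE.exists_back [Fintype V] {G : SimpleGraph V} {k : ℕ}
    (h : HasTreewidthLE G k) :
    ∃ (L : V ↪ ℕ) (back : V → Finset V), (∀ v, ∀ u ∈ back v, L u < L v) ∧
      IsPerfectElimination L back ∧
      (∀ ⦃u v⦄, G.Adj u v → L u < L v → u ∈ back v) ∧ (∀ v, #(back v) ≤ k) := by
  classical
  obtain ⟨β, T, bag, hdec, hwidth⟩ := h
  obtain ⟨L, top, htop, hbag⟩ := hdec.exists_order
  obtain ⟨-, -, hedge, -⟩ := hdec
  refine ⟨L, fun v => {u | u ∈ bag (top v) ∧ L u < L v}, fun v u hu => (mem_filter.1 hu).2.2,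
    fun y a ha b hb hab => ?_, fun u v huv hlt => ?_, fun v => ?_⟩
  · simp only [mem_filter, mem_univ, true_and] at ha hb ⊢
    exact ⟨hbag _ a b ha.1 hb.1 hab, hab⟩
  · obtain ⟨t, hu, hv⟩ := hedge huv
    simpa using ⟨hbag t u v hu hv hlt, hlt⟩
  · calc _ ≤ #((bag (top v)).toFinset.erase v) := card_le_card fun u hu => by
          simp only [mem_filter, mem_univ, true_and] at hu
          simpa using ⟨L.injective.ne_iff.1 hu.2.ne, hu.1⟩
      _ = (bag (top v)).ncard - 1 := by
          rw [card_erase_of_mem (by simpa using htop v), Set.ncard_eq_toFinset_card']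
      _ ≤ k := by have := hwidth (top v); omega

/-- if tw(G) ≤ k then wcol_r(G) ≤ binom(r+k, k). -/
theorem wcol_le_choose_of_treewidth [Fintype V] (G : SimpleGraph V) (k r : ℕ)
    (h : HasTreewidthLE G k) : wcol G r ≤ (r + k).choose k := by
  classical
  obtain ⟨L, back, hlt, hpeo, hadj, hcard⟩ := h.exists_back
  exact wcol_le_choose_of_back hlt hpeo hadj hcard r
end

section
/- Let G = (V₁ ∪ V₂, E) be a bipartite graph and let Ḡ be its complement. Then for every r ≥ 3, wcol_r(Ḡ) = wcol_3(Ḡ). -/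
open SimpleGraph

variable {V : Type*}

lemma path2_isPath {H : SimpleGraph V} {x y z : V} (h1 : H.Adj x y) (h2 : H.Adj y z)
    (hxz : x ≠ z) : (Walk.cons h1 (Walk.cons h2 Walk.nil)).IsPath := by
  simp [Walk.isPath_def, h1.ne, h2.ne, hxz]

lemma path3_isPath {H : SimpleGraph V} {x y z w : V} (h1 : H.Adj x y) (h2 : H.Adj y z)
    (h3 : H.Adj z w) (hxz : x ≠ z) (hxw : x ≠ w) (hyw : y ≠ w) :
    (Walk.cons h1 (Walk.cons h2 (Walk.cons h3 Walk.nil))).IsPath := by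
  simp [Walk.isPath_def, h1.ne, h2.ne, h3.ne, hxz, hxw, hyw]

/-- Core case analysis: a path of length 4 across the bipartition can be shortcut. -/
lemma core {H : SimpleGraph V} {A B : Set V}
    (hcov : ∀ x, x ∈ A ∨ x ∈ B)
    (hsame : ∀ x y, x ≠ y → (x ∈ A ∧ y ∈ A) ∨ (x ∈ B ∧ y ∈ B) → H.Adj x y)
    {v a b c u : V} (hva : H.Adj v a) (hab : H.Adj a b) (hbc : H.Adj b c)
    (hcu : H.Adj c u) (hvA : v ∈ A) (huB : u ∈ B)
    (hvb : v ≠ b) (hvc : v ≠ c) (hvu : v ≠ u) (hau : a ≠ u) (hbu : b ≠ u) (hcune : c ≠ u) :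
    ∃ q : H.Walk v u, q.IsPath ∧ q.length ≤ 3 ∧
      ∀ w ∈ q.support, w = v ∨ w = a ∨ w = b ∨ w = c ∨ w = u := by
  rcases hcov a with haA | haB
  · rcases hcov b with hbA | hbB
    · rcases hcov c with hcA | hcB
      · -- c ∈ A : v - c - u
        exact ⟨Walk.cons (hsame v c hvc (Or.inl ⟨hvA, hcA⟩)) (Walk.cons hcu Walk.nil),
          path2_isPath _ hcu hvu, by simp, by intro w hw; simp at hw; tauto⟩
      · -- b ∈ A, c ∈ B : v - b - c - u
        exact ⟨Walk.cons (hsame v b hvb (Or.inl ⟨hvA, hbA⟩))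
            (Walk.cons hbc (Walk.cons (hsame c u hcune (Or.inr ⟨hcB, huB⟩)) Walk.nil)),
          path3_isPath _ _ _ hvc hvu hbu, by simp, by intro w hw; simp at hw; tauto⟩
    · -- a ∈ A, b ∈ B : v - a - b - u
      exact ⟨Walk.cons hva (Walk.cons hab
          (Walk.cons (hsame b u hbu (Or.inr ⟨hbB, huB⟩)) Walk.nil)),
        path3_isPath _ _ _ hvb hvu hau, by simp, by intro w hw; simp at hw; tauto⟩
  · -- a ∈ B : v - a - u
    exact ⟨Walk.cons hva (Walk.cons (hsame a u hau (Or.inr ⟨haB, huB⟩)) Walk.nil),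
      path2_isPath _ _ hvu, by simp, by intro w hw; simp at hw; tauto⟩

/-- Any path of length 4 in such a graph can be shortcut to length ≤ 3 within its support. -/
lemma shortcut4 {H : SimpleGraph V} {A B : Set V}
    (hcov : ∀ x, x ∈ A ∨ x ∈ B)
    (hsame : ∀ x y, x ≠ y → (x ∈ A ∧ y ∈ A) ∨ (x ∈ B ∧ y ∈ B) → H.Adj x y)
    {v u : V} (p : H.Walk v u) (hp : p.IsPath) (hl : p.length = 4) :
    ∃ q : H.Walk v u, q.IsPath ∧ q.length ≤ 3 ∧ ∀ w ∈ q.support, w ∈ p.support := by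
  cases p with
  | nil => simp at hl
  | cons h1 p =>
  cases p with
  | nil => simp at hl
  | cons h2 p =>
  cases p with
  | nil => simp at hl
  | cons h3 p =>
  cases p with
  | nil => simp at hl
  | cons h4 p =>
  cases p with
  | cons h5 p => simp at hl
  | nil =>
    simp only [Walk.isPath_def, Walk.support_cons, Walk.support_nil] at hp
    simp only [List.nodup_cons, List.mem_cons, List.not_mem_nil, or_false,
      List.mem_singleton, not_or, List.nodup_nil] at hp
    obtain ⟨⟨hva, hvb, hvc, hvu⟩, ⟨hab, hac, hau⟩, ⟨hbc, hbu⟩, hcu, -⟩ := hp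
    rename_i a b c
    -- vertices: v, a, b, c, u
    rcases hcov v with hvA | hvB <;> rcases hcov u with huA | huB
    · exact ⟨Walk.cons (hsame v u hvu (Or.inl ⟨hvA, huA⟩)) Walk.nil,
        by simp [Walk.isPath_def, hvu], by simp, by intro w hw; simp at hw ⊢; tauto⟩
    · obtain ⟨q, hq1, hq2, hq3⟩ := core hcov hsame h1 h2 h3 h4 hvA huB hvb hvc hvu hau hbu hcu
      exact ⟨q, hq1, hq2, by intro w hw; have := hq3 w hw; simp; tauto⟩
    · have hsame' : ∀ x y, x ≠ y → (x ∈ B ∧ y ∈ B) ∨ (x ∈ A ∧ y ∈ A) → H.Adj x y :=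
        fun x y hxy hc => hsame x y hxy hc.symm
      have hcov' : ∀ x, x ∈ B ∨ x ∈ A := fun x => (hcov x).symm
      obtain ⟨q, hq1, hq2, hq3⟩ := core hcov' hsame' h1 h2 h3 h4 hvB huA hvb hvc hvu hau hbu hcu
      exact ⟨q, hq1, hq2, by intro w hw; have := hq3 w hw; simp; tauto⟩
    · exact ⟨Walk.cons (hsame v u hvu (Or.inr ⟨hvB, huB⟩)) Walk.nil,
        by simp [Walk.isPath_def, hvu], by simp, by intro w hw; simp at hw ⊢; tauto⟩

/-- Any path can be shortcut to length ≤ 3 within its support. -/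
lemma shortcut {H : SimpleGraph V} {A B : Set V}
    (hcov : ∀ x, x ∈ A ∨ x ∈ B)
    (hsame : ∀ x y, x ≠ y → (x ∈ A ∧ y ∈ A) ∨ (x ∈ B ∧ y ∈ B) → H.Adj x y)
    {v u : V} (p : H.Walk v u) (hp : p.IsPath) :
    ∃ q : H.Walk v u, q.IsPath ∧ q.length ≤ 3 ∧ ∀ w ∈ q.support, w ∈ p.support := by
  induction p with
  | nil => exact ⟨Walk.nil, by simp, by simp, by simp⟩
  | cons h p ih =>
    obtain ⟨q', hq'p, hq'l, hq's⟩ := ih hp.of_cons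
    have hvns : _ ∉ q'.support := fun hw => ((Walk.cons_isPath_iff h p).mp hp).2 (hq's _ hw)
    have hq0p : (Walk.cons h q').IsPath := hq'p.cons hvns
    have hsub : ∀ w ∈ (Walk.cons h q').support, w ∈ (Walk.cons h p).support := by
      intro w hw
      simp only [Walk.support_cons, List.mem_cons] at hw ⊢
      rcases hw with hw | hw
      · exact Or.inl hw
      · exact Or.inr (hq's _ hw)
    by_cases hl : q'.length ≤ 2
    · exact ⟨Walk.cons h q', hq0p, by simp; omega, hsub⟩
    · have hl4 : (Walk.cons h q').length = 4 := by simp; omega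
      obtain ⟨q, hq1, hq2, hq3⟩ := shortcut4 hcov hsame _ hq0p hl4
      exact ⟨q, hq1, hq2, fun w hw => hsub w (hq3 w hw)⟩

theorem wcol_compl_bipartite_eq' [Fintype V] (G : SimpleGraph V) (V₁ V₂ : Set V)
    (hdisj : Disjoint V₁ V₂) (hcover : V₁ ∪ V₂ = Set.univ)
    (hbip : ∀ u v, G.Adj u v → (u ∈ V₁ ∧ v ∈ V₂) ∨ (u ∈ V₂ ∧ v ∈ V₁))
    (r : ℕ) (hr : 3 ≤ r) :
    sInf {k | ∃ L : V ↪ ℕ, ∀ v, ({u | ∃ p : Gᶜ.Walk v u, p.IsPath ∧ p.length ≤ r ∧ ∀ w ∈ p.support, L u ≤ L w} : Set V).ncard ≤ k}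
    = sInf {k | ∃ L : V ↪ ℕ, ∀ v, ({u | ∃ p : Gᶜ.Walk v u, p.IsPath ∧ p.length ≤ 3 ∧ ∀ w ∈ p.support, L u ≤ L w} : Set V).ncard ≤ k} := by
  have hcov : ∀ x, x ∈ V₁ ∨ x ∈ V₂ := by
    intro x
    have : x ∈ V₁ ∪ V₂ := hcover ▸ Set.mem_univ x
    exact this
  have hsame : ∀ x y, x ≠ y → (x ∈ V₁ ∧ y ∈ V₁) ∨ (x ∈ V₂ ∧ y ∈ V₂) → Gᶜ.Adj x y := by
    intro x y hne hc
    rw [compl_adj]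
    refine ⟨hne, fun hadj => ?_⟩
    rcases hbip x y hadj with ⟨hx, hy⟩ | ⟨hx, hy⟩ <;> rcases hc with ⟨hx', hy'⟩ | ⟨hx', hy'⟩
    · exact Set.disjoint_left.mp hdisj hy' hy
    · exact Set.disjoint_left.mp hdisj hx hx'
    · exact Set.disjoint_left.mp hdisj hx' hx
    · exact Set.disjoint_left.mp hdisj hy hy'
  have hW : ∀ (L : V ↪ ℕ) (v : V),
      ({u | ∃ p : Gᶜ.Walk v u, p.IsPath ∧ p.length ≤ r ∧ ∀ w ∈ p.support, L u ≤ L w} : Set V)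
      = {u | ∃ p : Gᶜ.Walk v u, p.IsPath ∧ p.length ≤ 3 ∧ ∀ w ∈ p.support, L u ≤ L w} := by
    intro L v
    ext u
    constructor
    · rintro ⟨p, hp, hlen, hmin⟩
      obtain ⟨q, hq1, hq2, hq3⟩ := shortcut hcov hsame p hp
      exact ⟨q, hq1, hq2, fun w hw => hmin w (hq3 w hw)⟩
    · rintro ⟨p, hp, hlen, hmin⟩
      exact ⟨p, hp, hlen.trans hr, hmin⟩
  congr 1
  ext k
  simp only [Set.mem_setOf_eq, hW]

/-- for the complement of a bipartite graph, wcol_r = wcol_3 for all r ≥ 3. -/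
theorem wcol_compl_bipartite_eq [Fintype V] (G : SimpleGraph V) (V₁ V₂ : Set V)
    (hdisj : Disjoint V₁ V₂) (hcover : V₁ ∪ V₂ = Set.univ)
    (hbip : ∀ u v, G.Adj u v → (u ∈ V₁ ∧ v ∈ V₂) ∨ (u ∈ V₂ ∧ v ∈ V₁))
    (r : ℕ) (hr : 3 ≤ r) : wcol Gᶜ r = wcol Gᶜ 3 := by
  unfold wcol WReach
  exact wcol_compl_bipartite_eq' G V₁ V₂ hdisj hcover hbip r hr
end
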